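/- In the reduction instance, in any valid schedule that completes all 4n tasks by the deadline T = E + nS + S/4, the task processed by worker Q_{n−1} (the worker with computation time E + (n−1)S) is one of the first four tasks sent by worker P to the master. -/

import Mathlib

open scoped Classical

/-- A schedule on a star master–worker platform with `W` workers.  Worker `i` has
per-task communication time `c i`, per-task computation time `w i`, and initially
holds `L i` identical unit tasks.  All task transfers pass through the master under
the bidirectional one-port model (the master receives from at most one worker and
sends to at most one worker at any time, but may do both simultaneously); a worker
cannot start processing a received task before its reception completes, and
computation and communication may overlap.  Since the tasks are identical, a
schedule is described by the worker→master receptions, the master→worker emissions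
and the task executions, subject to availability (counting) constraints. -/
structure StarSchedule (W : ℕ) (c w : Fin W → ℝ) (L : Fin W → ℕ) where
  /-- number of worker→master transfers -/
  nRecv : ℕ
  /-- number of master→worker transfers -/
  nSend : ℕ
  /-- number of task executions -/
  nProc : ℕ
  /-- sender of the `k`-th worker→master transfer -/
  rsrc : Fin nRecv → Fin W
  /-- start time of the `k`-th worker→master transfer (it lasts `c (rsrc k)`) -/
  rstart : Fin nRecv → ℝ
  /-- destination of the `k`-th master→worker transfer -/
  sdst : Fin nSend → Fin W
  /-- start time of the `k`-th master→worker transfer (it lasts `c (sdst k)`) -/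
  sstart : Fin nSend → ℝ
  /-- the worker performing the `p`-th task execution -/
  pw : Fin nProc → Fin W
  /-- start time of the `p`-th task execution (it lasts `w (pw p)`) -/
  pstart : Fin nProc → ℝ
  rstart_nonneg : ∀ k, 0 ≤ rstart k
  sstart_nonneg : ∀ k, 0 ≤ sstart k
  pstart_nonneg : ∀ p, 0 ≤ pstart p
  /-- every task is eventually processed -/
  all_processed : nProc = ∑ i, L i
  /-- the master receives from at most one worker at a time -/
  oneport_in : ∀ k k', k ≠ k' →
    rstart k + c (rsrc k) ≤ rstart k' ∨ rstart k' + c (rsrc k') ≤ rstart k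
  /-- the master sends to at most one worker at a time -/
  oneport_out : ∀ k k', k ≠ k' →
    sstart k + c (sdst k) ≤ sstart k' ∨ sstart k' + c (sdst k') ≤ sstart k
  /-- the master can only forward tasks that it has completely received -/
  master_avail : ∀ t : ℝ,
    (Finset.univ.filter (fun k => sstart k ≤ t)).card ≤
      (Finset.univ.filter (fun k => rstart k + c (rsrc k) ≤ t)).card
  /-- a worker can only send or process tasks that it holds: at any time, the
  number of emissions it has begun plus the number of executions it has begun does
  not exceed its initial load plus the number of tasks it has completely
  received -/
  worker_avail : ∀ (i : Fin W) (t : ℝ),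
    (Finset.univ.filter (fun k => rsrc k = i ∧ rstart k ≤ t)).card +
      (Finset.univ.filter (fun p => pw p = i ∧ pstart p ≤ t)).card ≤
    L i + (Finset.univ.filter (fun k => sdst k = i ∧ sstart k + c (sdst k) ≤ t)).card
  /-- each worker processes at most one task at a time -/
  proc_seq : ∀ p p', p ≠ p' → pw p = pw p' →
    pstart p + w (pw p) ≤ pstart p' ∨ pstart p' + w (pw p') ≤ pstart p

/-- The schedule has makespan at most `T`: every task execution finishes by `T`. -/
def FinishesBy {W : ℕ} {c w : Fin W → ℝ} {L : Fin W → ℕ}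
    (σ : StarSchedule W c w L) (T : ℝ) : Prop :=
  ∀ p, σ.pstart p + w (σ.pw p) ≤ T
/-- Communication times of the reduction platform: worker `0` is `P` (per-task
communication time `S/4`), workers `1,…,3n` are the `Pᵢ` (communication time
`xᵢ = S/4 + yᵢ/8`), and workers `3n+1,…,4n` are `Q₀,…,Q_{n-1}` (communication
time `S/8`). -/
noncomputable def redC (n S : ℕ) (y : Fin (3*n) → ℕ) : Fin (4*n+1) → ℝ := fun i =>
  if h0 : i.val = 0 then (S : ℝ) / 4
  else if h : i.val ≤ 3*n then (S : ℝ) / 4 + (y ⟨i.val - 1, by omega⟩ : ℝ) / 8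
  else (S : ℝ) / 8

/-- Computation times of the reduction platform: `P` needs `T + 1` per task
(where `T = E + nS + S/4` is the deadline), each `Pᵢ` needs `E = (n+1)S`, and
`Q_q` (worker `3n+1+q`) needs `E + q·S`. -/
noncomputable def redW (n S : ℕ) : Fin (4*n+1) → ℝ := fun i =>
  if i.val = 0 then (((n : ℝ) + 1) * S + (n : ℝ) * S + (S : ℝ) / 4) + 1
  else if i.val ≤ 3*n then ((n : ℝ) + 1) * S
  else ((n : ℝ) + 1) * S + ((i.val - (3*n+1) : ℕ) : ℝ) * S

/-- Initial loads of the reduction platform: worker `P` holds the `4n` tasks,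
all other workers hold none. -/
def redL (n : ℕ) : Fin (4*n+1) → ℕ := fun i => if i.val = 0 then 4*n else 0

/-- The deadline `T = E + nS + S/4` with `E = (n+1)S`. -/
noncomputable def redT (n S : ℕ) : ℝ := ((n : ℝ) + 1) * S + (n : ℝ) * S + (S : ℝ) / 4

/-- `p` partitions the `3n` values `y i` into `n` triples each of sum exactly `S`. -/
def IsThreePartition (n S : ℕ) (y : Fin (3*n) → ℕ) (p : Fin (3*n) → Fin n) : Prop :=
  ∀ g : Fin n, (Finset.univ.filter (fun i => p i = g)).card = 3 ∧
    ∑ i ∈ Finset.univ.filter (fun i => p i = g), y i = S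

lemma disjoint_mass_le {ι : Type*} (F : Finset ι) (a ℓ : ι → ℝ) :
    ∀ (B : ℝ), 0 ≤ B → (∀ j ∈ F, 0 ≤ a j) → (∀ j ∈ F, 0 < ℓ j) →
    (∀ j ∈ F, a j + ℓ j ≤ B) →
    (∀ j ∈ F, ∀ k ∈ F, j ≠ k → a j + ℓ j ≤ a k ∨ a k + ℓ k ≤ a j) →
    ∑ j ∈ F, ℓ j ≤ B := by
  classical
  induction F using Finset.strongInduction with
  | _ F ih =>
    intro B hB ha hl hend hdisj
    rcases F.eq_empty_or_nonempty with rfl | hne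
    · simpa using hB
    · obtain ⟨j₀, hj₀F, hj₀⟩ := F.exists_max_image a hne
      have hrest : ∀ k ∈ F.erase j₀, a k + ℓ k ≤ a j₀ := by
        intro k hk
        have hkF := Finset.mem_of_mem_erase hk
        have hkne := Finset.ne_of_mem_erase hk
        rcases hdisj j₀ hj₀F k hkF (Ne.symm hkne) with h | h
        · exfalso; have h1 := hj₀ k hkF; have h2 := hl j₀ hj₀F; linarith
        · exact h
      have hIH := ih (F.erase j₀) (Finset.erase_ssubset hj₀F) (a j₀) (ha j₀ hj₀F)
        (fun j hj => ha j (Finset.mem_of_mem_erase hj))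
        (fun j hj => hl j (Finset.mem_of_mem_erase hj))
        hrest
        (fun j hj k hk hjk => hdisj j (Finset.mem_of_mem_erase hj) k (Finset.mem_of_mem_erase hk) hjk)
      have hsum := Finset.sum_erase_add F ℓ hj₀F
      have h2 := hend j₀ hj₀F
      linarith

section lems
variable {n S : ℕ} {y : Fin (3*n) → ℕ} {i : Fin (4*n+1)}

lemma redC_pos (hS : 0 < S) : 0 < redC n S y i := by
  have hS' : (0:ℝ) < (S:ℝ) := by exact_mod_cast hS
  unfold redC
  split_ifs with h0 h
  · linarith
  · have : (0:ℝ) ≤ (y ⟨i.val - 1, by omega⟩ : ℝ) := by positivity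
    linarith
  · linarith

lemma redC_ge_eighth (hS : 0 < S) : (S:ℝ)/8 ≤ redC n S y i := by
  have hS' : (0:ℝ) < (S:ℝ) := by exact_mod_cast hS
  unfold redC
  split_ifs with h0 h
  · linarith
  · have : (0:ℝ) ≤ (y ⟨i.val - 1, by omega⟩ : ℝ) := by positivity
    linarith
  · linarith

lemma redC_of_gt (h : 3*n < i.val) : redC n S y i = (S:ℝ)/8 := by
  unfold redC
  rw [dif_neg (by omega), dif_neg (by omega)]

lemma redC_ge_quarter (h : i.val ≤ 3*n) : (S:ℝ)/4 ≤ redC n S y i := by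
  unfold redC
  by_cases h0 : i.val = 0
  · rw [dif_pos h0]
  · rw [dif_neg h0, dif_pos h]
    have : (0:ℝ) ≤ (y ⟨i.val - 1, by omega⟩ : ℝ) := by positivity
    linarith

lemma redC_gt_quarter (hS : 0 < S) (hy : ∀ j, S < 4 * y j) (h0 : i.val ≠ 0) (h : i.val ≤ 3*n) :
    (S:ℝ)/4 < redC n S y i := by
  unfold redC
  rw [dif_neg h0, dif_pos h]
  have h1 : 0 < y ⟨i.val - 1, by omega⟩ := by have := hy ⟨i.val - 1, by omega⟩; omega
  have : (0:ℝ) < (y ⟨i.val - 1, by omega⟩ : ℝ) := by exact_mod_cast h1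
  linarith

lemma redW_zero (h : i.val = 0) : redW n S i = redT n S + 1 := by
  unfold redW redT; rw [if_pos h]

lemma redW_ge (h : i.val ≠ 0) : ((n:ℝ)+1)*(S:ℝ) ≤ redW n S i := by
  unfold redW
  rw [if_neg h]
  split_ifs with h1
  · exact le_refl _
  · have : (0:ℝ) ≤ ((i.val - (3*n+1) : ℕ) : ℝ) * S := by positivity
    linarith

lemma deadline_Q (h : 3*n < i.val) :
    redT n S - redW n S i = (n:ℝ)*(S:ℝ) + (S:ℝ)/4 - ((i.val - (3*n+1) : ℕ) : ℝ)*S := by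
  unfold redT redW
  rw [if_neg (by omega), if_neg (by omega)]
  ring
end lems

set_option maxHeartbeats 3200000 in
/-- **The task associated to worker `Q_{n-1}` is one of the first four tasks sent
by worker `P`.**  In the reduction instance, in any valid schedule meeting the
deadline `T = E + nS + S/4`, there is a master→worker emission towards worker
`Q_{n-1}` (worker `3n + 1 + (n-1)`, the one of computation time `E + (n-1)S`)
such that, when this emission starts, at most `4` worker→master transfers have
been completed — i.e. the task it carries is one of the first four tasks sent by
worker `P` to the master. -/
theorem Q_last_receives_one_of_first_four_tasks
    (n S : ℕ) (hS : 0 < S) (hn : 0 < n) (y : Fin (3*n) → ℕ)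
    (hy : ∀ i, S < 4 * y i ∧ 2 * y i < S)
    (σ : StarSchedule (4*n+1) (redC n S y) (redW n S) (redL n))
    (hσ : FinishesBy σ (redT n S)) :
    ∃ k : Fin σ.nSend, σ.sdst k = ⟨3*n + 1 + (n - 1), by omega⟩ ∧
      (Finset.univ.filter (fun j : Fin σ.nRecv =>
        σ.rstart j + redC n S y (σ.rsrc j) ≤ σ.sstart k)).card ≤ 4 := by
  classical
  have hS' : (0:ℝ) < (S:ℝ) := by exact_mod_cast hS
  have hn1 : (1:ℝ) ≤ (n:ℝ) := by exact_mod_cast hn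
  have hTval : redT n S = ((n:ℝ)+1)*(S:ℝ) + (n:ℝ)*(S:ℝ) + (S:ℝ)/4 := rfl
  -- nProc = 4n
  have hnP : σ.nProc = 4*n := by
    rw [σ.all_processed]
    have h1 : ∀ i : Fin (4*n+1), redL n i = if i = (⟨0, by omega⟩ : Fin (4*n+1)) then 4*n else 0 := by
      intro i
      by_cases h : i.val = 0
      · rw [redL, if_pos h, if_pos (Fin.ext h)]
      · rw [redL, if_neg h, if_neg (fun hh => h (by rw [hh]))]
    rw [Finset.sum_congr rfl (fun i _ => h1 i), Finset.sum_ite_eq' Finset.univ _ (fun _ => 4*n),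
      if_pos (Finset.mem_univ _)]
  -- pw never at worker 0
  have hpw0 : ∀ p, (σ.pw p).val ≠ 0 := by
    intro p h0
    have h1 := hσ p
    have h2 : redW n S (σ.pw p) = redT n S + 1 := by
      unfold redW redT; rw [if_pos h0]
    have h3 := σ.pstart_nonneg p
    rw [h2] at h1; linarith
  have hwge : ∀ p, ((n:ℝ)+1)*(S:ℝ) ≤ redW n S (σ.pw p) := by
    intro p
    unfold redW
    rw [if_neg (hpw0 p)]
    split_ifs with h1
    · exact le_refl _
    · have : (0:ℝ) ≤ (((σ.pw p).val - (3*n+1) : ℕ) : ℝ) * S := by positivity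
      linarith
  -- injectivity of pw
  have hinj : Function.Injective σ.pw := by
    intro p p' hpp
    by_contra hne
    have h2 := σ.proc_seq p p' hne hpp
    have ha := hσ p; have hb := hσ p'
    have h3 := hwge p; have h4 := hwge p'
    have h5 := σ.pstart_nonneg p; have h6 := σ.pstart_nonneg p'
    rw [hTval] at ha hb
    have hx : ((n:ℝ)+1)*(S:ℝ) = (n:ℝ)*(S:ℝ) + S := by ring
    rw [hpp] at h3 ha
    rw [hpp] at h2
    rcases h2 with h | h
    · nlinarith
    · nlinarith
  -- NZ
  have hNZcard : (Finset.univ.filter (fun i : Fin (4*n+1) => i.val ≠ 0)).card = 4*n := by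
    have h1 : Finset.univ.filter (fun i : Fin (4*n+1) => i.val ≠ 0)
        = Finset.univ.erase (⟨0, by omega⟩ : Fin (4*n+1)) := by
      ext i
      rw [Finset.mem_filter, Finset.mem_erase]
      exact ⟨fun h => ⟨fun hh => h.2 (by rw [hh]), Finset.mem_univ _⟩,
        fun h => ⟨Finset.mem_univ _, fun hh => h.1 (Fin.ext hh)⟩⟩
    rw [h1, Finset.card_erase_of_mem (Finset.mem_univ _)]
    simp
  -- surjectivity
  have hsurj : ∀ i : Fin (4*n+1), i.val ≠ 0 → ∃ p, σ.pw p = i := by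
    intro i hi
    have himg : Finset.univ.image σ.pw ⊆ Finset.univ.filter (fun i : Fin (4*n+1) => i.val ≠ 0) := by
      intro j hj
      simp only [Finset.mem_image] at hj
      obtain ⟨p, _, hp⟩ := hj
      simp only [Finset.mem_filter, Finset.mem_univ, true_and]
      rw [← hp]; exact hpw0 p
    have hcard : (Finset.univ.image σ.pw).card = 4*n := by
      rw [Finset.card_image_of_injective _ hinj, Finset.card_univ]
      simp [hnP]
    have heq : Finset.univ.image σ.pw = Finset.univ.filter (fun i : Fin (4*n+1) => i.val ≠ 0) :=
      Finset.eq_of_subset_of_card_le himg (by rw [hcard, hNZcard])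
    have : i ∈ Finset.univ.image σ.pw := by
      rw [heq]; simp only [Finset.mem_filter, Finset.mem_univ, true_and]; exact hi
    simpa using this
  -- feeding send
  have hfeed : ∀ i : Fin (4*n+1), i.val ≠ 0 →
      ∃ k, σ.sdst k = i ∧ σ.sstart k + redC n S y i ≤ redT n S - redW n S i := by
    intro i hi
    obtain ⟨p, hp⟩ := hsurj i hi
    have hple : σ.pstart p ≤ redT n S - redW n S i := by
      have := hσ p; rw [hp] at this; linarith
    have h := σ.worker_avail i (σ.pstart p)
    have hL : redL n i = 0 := by rw [redL, if_neg hi]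
    have h1 : 0 < (Finset.univ.filter (fun q => σ.pw q = i ∧ σ.pstart q ≤ σ.pstart p)).card :=
      Finset.card_pos.mpr ⟨p, by simp [hp]⟩
    have h2 : 0 < (Finset.univ.filter
        (fun k => σ.sdst k = i ∧ σ.sstart k + redC n S y (σ.sdst k) ≤ σ.pstart p)).card := by
      rw [hL] at h; omega
    obtain ⟨k, hk⟩ := Finset.card_pos.mp h2
    simp only [Finset.mem_filter, Finset.mem_univ, true_and] at hk
    refine ⟨k, hk.1, ?_⟩
    have h3 := hk.2
    rw [hk.1] at h3
    linarith
  -- the target worker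
  set istar : Fin (4*n+1) := ⟨4*n, by omega⟩ with histar
  have histar0 : (istar).val ≠ 0 := by simp [histar]; omega
  have histarQ : 3*n < istar.val := by simp [histar]; omega
  have hcistar : redC n S y istar = (S:ℝ)/8 := redC_of_gt histarQ
  have hdeadistar : redT n S - redW n S istar = (S:ℝ) + (S:ℝ)/4 := by
    rw [deadline_Q histarQ]
    have h1 : 4*n - (3*n+1) = n - 1 := by omega
    have h2 : ((4*n - (3*n+1) : ℕ) : ℝ) = (n:ℝ) - 1 := by
      rw [h1]; push_cast [Nat.cast_sub hn]; ring
    show (n:ℝ)*(S:ℝ) + (S:ℝ)/4 - ((4*n - (3*n+1) : ℕ) : ℝ)*S = (S:ℝ) + (S:ℝ)/4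
    rw [h2]; ring
  obtain ⟨kst, hkst1, hkst2⟩ := hfeed istar histar0
  have hK : kst ∈ Finset.univ.filter (fun k => σ.sdst k = istar) := by simp [hkst1]
  obtain ⟨k₀, hk₀K, hk₀min⟩ := Finset.exists_min_image
    (Finset.univ.filter (fun k => σ.sdst k = istar)) σ.sstart ⟨kst, hK⟩
  have hk₀dst : σ.sdst k₀ = istar := (Finset.mem_filter.mp hk₀K).2
  have hs₀9 : σ.sstart k₀ ≤ 9*(S:ℝ)/8 := by
    have h1 := hk₀min kst hK
    rw [hcistar, hdeadistar] at hkst2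
    linarith
  refine ⟨k₀, by rw [hk₀dst]; exact Fin.ext (by simp [histar]; omega), ?_⟩
  by_contra hcon
  push_neg at hcon
  have h5 : 5 ≤ (Finset.univ.filter (fun j : Fin σ.nRecv =>
      σ.rstart j + redC n S y (σ.rsrc j) ≤ σ.sstart k₀)).card := hcon
  set tstar : ℝ := (n:ℝ)*(S:ℝ) + (S:ℝ)/4 with htstar
  clear_value tstar
  have hT_ge_tstar : ∀ i : Fin (4*n+1), i.val ≠ 0 → redT n S - redW n S i ≤ tstar := by
    intro i hi
    have := redW_ge (n := n) (S := S) (i := i) hi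
    rw [hTval, htstar]; linarith
  have hts9 : 9*(S:ℝ)/8 ≤ tstar := by
    rw [htstar]; nlinarith
  have hmass : ∀ t : ℝ, 0 ≤ t →
      ∑ j ∈ Finset.univ.filter (fun j : Fin σ.nRecv => σ.rstart j + redC n S y (σ.rsrc j) ≤ t),
        redC n S y (σ.rsrc j) ≤ t := by
    intro t ht
    exact disjoint_mass_le _ _ _ t ht (fun j _ => σ.rstart_nonneg j)
      (fun j _ => redC_pos hS) (fun j hj => (Finset.mem_filter.mp hj).2)
      (fun j _ k _ hjk => σ.oneport_in j k hjk)
  set A₀ := Finset.univ.filter (fun j : Fin σ.nRecv =>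
      σ.rstart j + redC n S y (σ.rsrc j) ≤ σ.sstart k₀) with hA₀def
  -- find the short reception
  have hex : ∃ j ∈ A₀, redC n S y (σ.rsrc j) < (S:ℝ)/4 := by
    by_contra hall
    push_neg at hall
    have h1 := Finset.card_nsmul_le_sum A₀ (fun j => redC n S y (σ.rsrc j)) ((S:ℝ)/4) hall
    have h2 := hmass (σ.sstart k₀) (σ.sstart_nonneg k₀)
    rw [nsmul_eq_mul] at h1
    have h3 : (5:ℝ) ≤ (A₀.card : ℝ) := by exact_mod_cast h5
    have h4 : (5:ℝ) * ((S:ℝ)/4) ≤ (A₀.card : ℝ) * ((S:ℝ)/4) :=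
      mul_le_mul_of_nonneg_right h3 (by linarith)
    rw [← hA₀def] at h2
    linarith
  obtain ⟨Rs, hRsA, hRsc⟩ := hex
  set i₁ := σ.rsrc Rs with hi₁def
  have hi₁Q : 3*n < i₁.val := by
    by_contra h
    push_neg at h
    have := redC_ge_quarter (S := S) (y := y) (i := i₁) h
    linarith
  have hci₁ : redC n S y i₁ = (S:ℝ)/8 := redC_of_gt hi₁Q
  set r₁ := σ.rstart Rs with hr₁def
  have hr₁ : r₁ + (S:ℝ)/8 ≤ σ.sstart k₀ := by
    have h1 := (Finset.mem_filter.mp hRsA).2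
    rw [← hi₁def, ← hr₁def, hci₁] at h1
    exact h1
  -- i₁ is not the target worker
  have hi₁ne : i₁ ≠ istar := by
    intro h
    have hwa := σ.worker_avail i₁ r₁
    have hL : redL n i₁ = 0 := by rw [redL, if_neg (by omega)]
    have h1 : 0 < (Finset.univ.filter (fun j => σ.rsrc j = i₁ ∧ σ.rstart j ≤ r₁)).card :=
      Finset.card_pos.mpr ⟨Rs, by simp [hi₁def, hr₁def]⟩
    have h2 : 0 < (Finset.univ.filter
        (fun k => σ.sdst k = i₁ ∧ σ.sstart k + redC n S y (σ.sdst k) ≤ r₁)).card := by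
      rw [hL] at hwa; omega
    obtain ⟨k', hk'⟩ := Finset.card_pos.mp h2
    simp only [Finset.mem_filter, Finset.mem_univ, true_and] at hk'
    have hk'K : k' ∈ Finset.univ.filter (fun k => σ.sdst k = istar) := by
      simp [hk'.1, h]
    have h3 := hk₀min k' hk'K
    have h4 := hk'.2
    rw [hk'.1, h, hcistar] at h4
    linarith
  have hn2 : 2 ≤ n := by
    have h1 : i₁.val < 4*n+1 := i₁.isLt
    have h2 : i₁.val ≠ 4*n := by
      intro h
      exact hi₁ne (Fin.ext (by rw [h, histar]))
    omega
  have hn2' : (2:ℝ) ≤ (n:ℝ) := by exact_mod_cast hn2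
  have hnS2 : 2*(S:ℝ) ≤ (n:ℝ)*(S:ℝ) := by nlinarith
  set RQ := Finset.univ.filter (fun j : Fin σ.nRecv =>
      σ.rstart j + redC n S y (σ.rsrc j) ≤ tstar ∧ 3*n < (σ.rsrc j).val) with hRQdef
  clear_value RQ
  have hRsRQ : Rs ∈ RQ := by
    rw [hRQdef]
    simp only [Finset.mem_filter, Finset.mem_univ, true_and]
    refine ⟨?_, hi₁Q⟩
    have h1 := (Finset.mem_filter.mp hRsA).2
    linarith
  have hν1 : 1 ≤ RQ.card := Finset.card_pos.mpr ⟨Rs, hRsRQ⟩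
  set SS := Finset.univ.filter (fun k : Fin σ.nSend =>
      σ.sstart k + redC n S y (σ.sdst k) ≤ tstar) with hSSdef
  clear_value SS
  -- supply bound
  have keyN : ∀ t : ℝ, 0 ≤ t → t ≤ tstar → ∀ mm : ℕ,
      mm ≤ (Finset.univ.filter (fun k : Fin σ.nSend => σ.sstart k ≤ t)).card →
      (mm:ℝ) * ((S:ℝ)/4) - (RQ.card:ℝ) * ((S:ℝ)/8) ≤ t := by
    intro t ht htt mm hmm
    have hMN := σ.master_avail t
    set A := Finset.univ.filter (fun j : Fin σ.nRecv =>
        σ.rstart j + redC n S y (σ.rsrc j) ≤ t) with hAdef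
    clear_value A
    have hcard : mm ≤ A.card := le_trans hmm hMN
    have hsplit := Finset.sum_filter_add_sum_filter_not A (fun j => 3*n < (σ.rsrc j).val)
      (fun j => redC n S y (σ.rsrc j))
    have hQsub : A.filter (fun j => 3*n < (σ.rsrc j).val) ⊆ RQ := by
      intro j hj
      simp only [hAdef, hRQdef, Finset.mem_filter, Finset.mem_univ, true_and] at hj ⊢
      exact ⟨le_trans hj.1 htt, hj.2⟩
    have hQsum : ∑ j ∈ A.filter (fun j => 3*n < (σ.rsrc j).val), redC n S y (σ.rsrc j)
        = ((A.filter (fun j => 3*n < (σ.rsrc j).val)).card : ℝ) * ((S:ℝ)/8) := by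
      rw [Finset.sum_congr rfl (fun j hj => redC_of_gt (Finset.mem_filter.mp hj).2),
        Finset.sum_const, nsmul_eq_mul]
    have hQ'sum : ((A.filter (fun j => ¬ 3*n < (σ.rsrc j).val)).card : ℝ) * ((S:ℝ)/4)
        ≤ ∑ j ∈ A.filter (fun j => ¬ 3*n < (σ.rsrc j).val), redC n S y (σ.rsrc j) := by
      have h0 := Finset.card_nsmul_le_sum (A.filter (fun j => ¬ 3*n < (σ.rsrc j).val))
        (fun j => redC n S y (σ.rsrc j)) ((S:ℝ)/4)
        (fun j hj => redC_ge_quarter (by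
          have := (Finset.mem_filter.mp hj).2
          omega))
      rw [nsmul_eq_mul] at h0
      exact h0
    have hmassA := hmass t ht
    rw [← hAdef] at hmassA
    have hqq : (A.filter (fun j => 3*n < (σ.rsrc j).val)).card
        + (A.filter (fun j => ¬ 3*n < (σ.rsrc j).val)).card = A.card :=
      Finset.card_filter_add_card_filter_not _
    have hc2 : ((A.filter (fun j => 3*n < (σ.rsrc j).val)).card:ℝ) ≤ (RQ.card:ℝ) := by
      exact_mod_cast Finset.card_le_card hQsub
    have hc1 : (mm:ℝ) ≤ ((A.filter (fun j => 3*n < (σ.rsrc j).val)).card:ℝ)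
        + ((A.filter (fun j => ¬ 3*n < (σ.rsrc j).val)).card:ℝ) := by
      have : mm ≤ (A.filter (fun j => 3*n < (σ.rsrc j).val)).card
        + (A.filter (fun j => ¬ 3*n < (σ.rsrc j).val)).card := by omega
      exact_mod_cast this
    have hm1 := mul_le_mul_of_nonneg_right hc1 (by linarith : (0:ℝ) ≤ (S:ℝ)/4)
    have hm2 := mul_le_mul_of_nonneg_right hc2 (by linarith : (0:ℝ) ≤ (S:ℝ)/8)
    linarith [hsplit, hQsum, hQ'sum, hmassA, hm1, hm2]
  -- fiber counting
  have hconv : ∀ i : Fin (4*n+1), SS.filter (fun k => σ.sdst k = i)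
      = Finset.univ.filter (fun k => σ.sdst k = i ∧ σ.sstart k + redC n S y (σ.sdst k) ≤ tstar) := by
    intro i; ext k
    simp only [hSSdef, Finset.mem_filter, Finset.mem_univ, true_and]
    tauto
  have hfibs : SS.card = ∑ i : Fin (4*n+1), (SS.filter (fun k => σ.sdst k = i)).card :=
    Finset.card_eq_sum_card_fiberwise (fun x _ => Finset.mem_univ _)
  have hρs : RQ.card = ∑ i : Fin (4*n+1), (RQ.filter (fun j => σ.rsrc j = i)).card :=
    Finset.card_eq_sum_card_fiberwise (fun x _ => Finset.mem_univ _)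
  have hlow : ∀ i : Fin (4*n+1),
      (if i.val ≠ 0 then 1 else 0) + (RQ.filter (fun j => σ.rsrc j = i)).card
        ≤ (SS.filter (fun k => σ.sdst k = i)).card := by
    intro i
    by_cases hi : i.val = 0
    · have hempty : RQ.filter (fun j => σ.rsrc j = i) = ∅ := by
        ext j
        simp only [hRQdef, Finset.mem_filter, Finset.mem_univ, true_and,
          Finset.notMem_empty, iff_false, not_and]
        rintro ⟨_, hq⟩ hsrc
        rw [hsrc] at hq; omega
      simp [hi, hempty]
    · rw [if_pos hi]
      have hwa := σ.worker_avail i tstar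
      have hL : redL n i = 0 := by rw [redL, if_neg hi]
      obtain ⟨p, hp⟩ := hsurj i hi
      have hpd : σ.pstart p ≤ tstar := by
        have h0 := hσ p; rw [hp] at h0
        have h2 := hT_ge_tstar i hi
        linarith
      have h2 : 1 ≤ (Finset.univ.filter (fun q => σ.pw q = i ∧ σ.pstart q ≤ tstar)).card :=
        Finset.card_pos.mpr ⟨p, by simp [hp, hpd]⟩
      have h1 : (RQ.filter (fun j => σ.rsrc j = i)).card
          ≤ (Finset.univ.filter (fun j => σ.rsrc j = i ∧ σ.rstart j ≤ tstar)).card := by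
        apply Finset.card_le_card
        intro j hj
        simp only [hRQdef, Finset.mem_filter, Finset.mem_univ, true_and] at hj ⊢
        refine ⟨hj.2, ?_⟩
        have h3 := hj.1.1
        have h4 := redC_pos (n := n) (S := S) (y := y) (i := σ.rsrc j) hS
        linarith
      rw [hconv i]
      omega
  have hsum_ite : ∑ i : Fin (4*n+1), (if i.val ≠ 0 then 1 else 0) = 4*n := by
    calc ∑ i : Fin (4*n+1), (if i.val ≠ 0 then 1 else 0)
        = ∑ i ∈ Finset.univ.filter (fun i : Fin (4*n+1) => i.val ≠ 0), 1 :=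
          (Finset.sum_filter _ _).symm
      _ = 4*n := by rw [Finset.sum_const, smul_eq_mul, mul_one, hNZcard]
  have hmge : 4*n + RQ.card ≤ SS.card := by
    calc 4*n + RQ.card
        = ∑ i : Fin (4*n+1), ((if i.val ≠ 0 then 1 else 0)
            + (RQ.filter (fun j => σ.rsrc j = i)).card) := by
          rw [Finset.sum_add_distrib, hsum_ite, ← hρs]
      _ ≤ ∑ i : Fin (4*n+1), (SS.filter (fun k => σ.sdst k = i)).card :=
          Finset.sum_le_sum (fun i _ => hlow i)
      _ = SS.card := hfibs.symm
  -- the latest send in SS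
  have hSSne : SS.Nonempty := Finset.card_pos.mp (by omega)
  obtain ⟨km, hkmS, hkmmax⟩ := SS.exists_max_image σ.sstart hSSne
  have hkmend : σ.sstart km + redC n S y (σ.sdst km) ≤ tstar := by
    have := hkmS; rw [hSSdef] at this; exact (Finset.mem_filter.mp this).2
  have hum0 : 0 ≤ σ.sstart km := σ.sstart_nonneg _
  have humt : σ.sstart km ≤ tstar := by
    have := redC_pos (n:=n) (S:=S) (y:=y) (i := σ.sdst km) hS; linarith
  have hstarted : SS.card ≤ (Finset.univ.filter
      (fun k : Fin σ.nSend => σ.sstart k ≤ σ.sstart km)).card := by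
    apply Finset.card_le_card
    intro k hk; simp only [Finset.mem_filter, Finset.mem_univ, true_and]; exact hkmmax k hk
  have hum := keyN (σ.sstart km) hum0 humt SS.card hstarted
  -- m = 4n+1 and ν = 1
  have hm41 : SS.card = 4*n+1 := by
    have hc8 := redC_ge_eighth (n:=n) (S:=S) (y:=y) (i := σ.sdst km) hS
    have hA : ((4*n:ℕ):ℝ) + (RQ.card:ℝ) ≤ (SS.card:ℝ) := by exact_mod_cast hmge
    push_cast at hA
    have hB : (RQ.card:ℝ)*((S:ℝ)/8) ≤ ((SS.card:ℝ) - 4*(n:ℝ))*((S:ℝ)/8) :=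
      mul_le_mul_of_nonneg_right (by linarith) (by linarith)
    have hmul : (SS.card:ℝ) * ((S:ℝ)/8) ≤ (4*(n:ℝ)+1) * ((S:ℝ)/8) := by
      nlinarith [hum, hkmend, hc8, hB, htstar]
    have hgoal : (SS.card:ℝ) ≤ 4*(n:ℝ)+1 := le_of_mul_le_mul_right hmul (by linarith)
    have h1 : SS.card ≤ 4*n+1 := by exact_mod_cast (by push_cast; linarith : ((SS.card:ℕ):ℝ) ≤ ((4*n+1:ℕ):ℝ))
    omega
  have hν1' : RQ.card = 1 := by omega
  -- pointwise fibre identities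
  have hρi₁ : 1 ≤ (RQ.filter (fun j => σ.rsrc j = i₁)).card :=
    Finset.card_pos.mpr ⟨Rs, Finset.mem_filter.mpr ⟨hRsRQ, hi₁def.symm⟩⟩
  have hadd : (RQ.filter (fun j => σ.rsrc j = i₁)).card
      + ∑ i ∈ Finset.univ.erase i₁, (RQ.filter (fun j => σ.rsrc j = i)).card
      = ∑ i : Fin (4*n+1), (RQ.filter (fun j => σ.rsrc j = i)).card :=
    Finset.add_sum_erase _ (fun i => (RQ.filter (fun j => σ.rsrc j = i)).card) (Finset.mem_univ i₁)
  have hρsum : ∑ i : Fin (4*n+1), (RQ.filter (fun j => σ.rsrc j = i)).card = 1 := by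
    rw [← hρs, hν1']
  have hρrest : ∑ i ∈ Finset.univ.erase i₁, (RQ.filter (fun j => σ.rsrc j = i)).card = 0 := by
    omega
  have hρi₁eq : (RQ.filter (fun j => σ.rsrc j = i₁)).card = 1 := by omega
  have hρ_other : ∀ i : Fin (4*n+1), i ≠ i₁ → (RQ.filter (fun j => σ.rsrc j = i)).card = 0 := by
    intro i hne
    exact (Finset.sum_eq_zero_iff).mp hρrest i (Finset.mem_erase.mpr ⟨hne, Finset.mem_univ _⟩)
  have hfib_eq : ∀ i : Fin (4*n+1),
      (if i.val ≠ 0 then 1 else 0) + (RQ.filter (fun j => σ.rsrc j = i)).card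
        = (SS.filter (fun k => σ.sdst k = i)).card := by
    have hsums : ∑ i : Fin (4*n+1), ((if i.val ≠ 0 then 1 else 0)
          + (RQ.filter (fun j => σ.rsrc j = i)).card)
        = ∑ i : Fin (4*n+1), (SS.filter (fun k => σ.sdst k = i)).card := by
      rw [Finset.sum_add_distrib, hsum_ite, ← hρs, ← hfibs, hν1', hm41]
    have h0 := (Finset.sum_eq_sum_iff_of_le (fun i _ => hlow i)).mp hsums
    intro i; exact h0 i (Finset.mem_univ i)
  have hdst0 : ∀ k ∈ SS, (σ.sdst k).val ≠ 0 := by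
    intro k hk h0
    have h1 := hfib_eq (σ.sdst k)
    rw [if_neg (by omega : ¬ ((σ.sdst k).val ≠ 0)),
      hρ_other (σ.sdst k) (fun h => by rw [h] at h0; omega)] at h1
    have h2 : 0 < (SS.filter (fun k' => σ.sdst k' = σ.sdst k)).card :=
      Finset.card_pos.mpr ⟨k, Finset.mem_filter.mpr ⟨hk, rfl⟩⟩
    omega
  -- lower bound on sstart km
  have humlb : (n:ℝ)*(S:ℝ) + (S:ℝ)/8 ≤ σ.sstart km := by
    rw [hm41, hν1'] at hum
    push_cast at hum
    linarith
  -- destination of km is a Q worker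
  have hcmle : redC n S y (σ.sdst km) ≤ (S:ℝ)/8 := by
    linarith [htstar, hkmend, humlb]
  have hdmQ : 3*n < (σ.sdst km).val := by
    by_contra h
    push_neg at h
    have := redC_ge_quarter (S := S) (y := y) h
    linarith
  have hcdm : redC n S y (σ.sdst km) = (S:ℝ)/8 := redC_of_gt hdmQ
  have humub : σ.sstart km ≤ (n:ℝ)*(S:ℝ) + (S:ℝ)/8 := by
    rw [hcdm] at hkmend
    linarith [htstar]
  -- second latest send
  have hSS'card : (SS.erase km).card = 4*n := by
    rw [Finset.card_erase_of_mem hkmS, hm41]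
    omega
  have hSS'ne : (SS.erase km).Nonempty := Finset.card_pos.mp (by omega)
  obtain ⟨k₂, hk₂mem, hk₂max⟩ := (SS.erase km).exists_max_image σ.sstart hSS'ne
  have hk₂S : k₂ ∈ SS := Finset.mem_of_mem_erase hk₂mem
  have hk₂ne : k₂ ≠ km := Finset.ne_of_mem_erase hk₂mem
  have hk₂end : σ.sstart k₂ + redC n S y (σ.sdst k₂) ≤ tstar := by
    have := hk₂S; rw [hSSdef] at this; exact (Finset.mem_filter.mp this).2
  have hu₂lb : (n:ℝ)*(S:ℝ) - (S:ℝ)/8 ≤ σ.sstart k₂ := by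
    have hsub : (SS.erase km).card ≤ (Finset.univ.filter
        (fun k : Fin σ.nSend => σ.sstart k ≤ σ.sstart k₂)).card := by
      apply Finset.card_le_card
      intro k hk; simp only [Finset.mem_filter, Finset.mem_univ, true_and]; exact hk₂max k hk
    have h0 := keyN (σ.sstart k₂) (σ.sstart_nonneg k₂)
      (by have := redC_pos (n:=n) (S:=S) (y:=y) (i := σ.sdst k₂) hS; linarith) (4*n)
      (le_trans (le_of_eq hSS'card.symm) hsub)
    rw [hν1'] at h0
    push_cast at h0
    linarith
  have he₂m : σ.sstart k₂ + redC n S y (σ.sdst k₂) ≤ σ.sstart km := by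
    rcases σ.oneport_out k₂ km hk₂ne with h | h
    · exact h
    · exfalso
      have h1 := hkmmax k₂ hk₂S
      have h2 := redC_pos (n:=n) (S:=S) (y:=y) (i := σ.sdst km) hS
      linarith
  have hcd₂ : redC n S y (σ.sdst k₂) ≤ (S:ℝ)/4 := by linarith
  have hd₂0 : (σ.sdst k₂).val ≠ 0 := hdst0 k₂ hk₂S
  have hd₂Q : 3*n < (σ.sdst k₂).val := by
    by_contra h
    push_neg at h
    have := redC_gt_quarter (S := S) (y := y) hS (fun j => (hy j).1) hd₂0 h
    linarith
  have he₂ge : (n:ℝ)*(S:ℝ) ≤ σ.sstart k₂ + redC n S y (σ.sdst k₂) := by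
    have := redC_ge_eighth (n:=n) (S:=S) (y:=y) (i := σ.sdst k₂) hS
    linarith
  have hemge : (n:ℝ)*(S:ℝ) + (S:ℝ)/4 ≤ σ.sstart km + redC n S y (σ.sdst km) := by
    rw [hcdm]; linarith
  -- the pump send to i₁
  have hpump : ∃ kp, σ.sdst kp = i₁ ∧ σ.sstart kp + redC n S y (σ.sdst kp) ≤ r₁ := by
    have hwa := σ.worker_avail i₁ r₁
    have hL : redL n i₁ = 0 := by rw [redL, if_neg (by omega)]
    have h1 : 0 < (Finset.univ.filter (fun j => σ.rsrc j = i₁ ∧ σ.rstart j ≤ r₁)).card :=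
      Finset.card_pos.mpr ⟨Rs, by simp [hi₁def, hr₁def]⟩
    have h2 : 0 < (Finset.univ.filter
        (fun k => σ.sdst k = i₁ ∧ σ.sstart k + redC n S y (σ.sdst k) ≤ r₁)).card := by
      rw [hL] at hwa; omega
    obtain ⟨kp, hkp⟩ := Finset.card_pos.mp h2
    simp only [Finset.mem_filter, Finset.mem_univ, true_and] at hkp
    exact ⟨kp, hkp.1, hkp.2⟩
  obtain ⟨kp, hkpdst, hkpend⟩ := hpump
  have hr₁S : r₁ ≤ (S:ℝ) := by linarith [hr₁, hs₀9]
  have hStstar : (S:ℝ) ≤ tstar := by rw [htstar]; nlinarith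
  have hkpS : kp ∈ SS := by
    rw [hSSdef]
    simp only [Finset.mem_filter, Finset.mem_univ, true_and]
    linarith
  have hkpne_m : kp ≠ km := by
    intro h
    rw [h, hcdm] at hkpend
    linarith [humlb, hnS2]
  have hkpne_2 : kp ≠ k₂ := by
    intro h
    rw [h] at hkpend
    linarith [he₂ge, hr₁S, hnS2]
  -- worker i₁'s execution
  obtain ⟨p₁, hp₁⟩ := hsurj i₁ (by omega)
  have hp₁d : σ.pstart p₁ ≤ redT n S - redW n S i₁ := by
    have := hσ p₁; rw [hp₁] at this; linarith
  have hu₁t : max (σ.pstart p₁) r₁ ≤ tstar := by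
    apply max_le
    · linarith [hT_ge_tstar i₁ (by omega : i₁.val ≠ 0)]
    · linarith
  have hfib2 : (SS.filter (fun k => σ.sdst k = i₁)).card = 2 := by
    have h0 := hfib_eq i₁
    rw [if_pos (by omega : i₁.val ≠ 0), hρi₁eq] at h0
    omega
  have hfib_complete : ∀ k, σ.sdst k = i₁ → k ∈ SS →
      σ.sstart k + redC n S y (σ.sdst k) ≤ max (σ.pstart p₁) r₁ := by
    intro k hkd hkS
    have hwa := σ.worker_avail i₁ (max (σ.pstart p₁) r₁)
    have hL : redL n i₁ = 0 := by rw [redL, if_neg (by omega)]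
    have h1 : 1 ≤ (Finset.univ.filter
        (fun j => σ.rsrc j = i₁ ∧ σ.rstart j ≤ max (σ.pstart p₁) r₁)).card :=
      Finset.card_pos.mpr ⟨Rs, by
        simp only [Finset.mem_filter, Finset.mem_univ, true_and, hr₁def]
        first
        | exact le_max_right _ _
        | exact ⟨hi₁def.symm, le_max_right _ _⟩⟩
    have h2 : 1 ≤ (Finset.univ.filter
        (fun q => σ.pw q = i₁ ∧ σ.pstart q ≤ max (σ.pstart p₁) r₁)).card :=
      Finset.card_pos.mpr ⟨p₁, by
        simp only [Finset.mem_filter, Finset.mem_univ, true_and]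
        exact ⟨hp₁, le_max_left _ _⟩⟩
    have hF₁sub : (Finset.univ.filter (fun k' => σ.sdst k' = i₁ ∧
          σ.sstart k' + redC n S y (σ.sdst k') ≤ max (σ.pstart p₁) r₁))
        ⊆ SS.filter (fun k' => σ.sdst k' = i₁) := by
      intro k' hk'
      simp only [Finset.mem_filter, Finset.mem_univ, true_and, hSSdef] at hk' ⊢
      exact ⟨le_trans hk'.2 hu₁t, hk'.1⟩
    have hF₁card : 2 ≤ (Finset.univ.filter (fun k' => σ.sdst k' = i₁ ∧
        σ.sstart k' + redC n S y (σ.sdst k') ≤ max (σ.pstart p₁) r₁)).card := by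
      rw [hL] at hwa; omega
    have heq := Finset.eq_of_subset_of_card_le hF₁sub (by rw [hfib2]; exact hF₁card)
    have hkmem : k ∈ Finset.univ.filter (fun k' => σ.sdst k' = i₁ ∧
        σ.sstart k' + redC n S y (σ.sdst k') ≤ max (σ.pstart p₁) r₁) := by
      rw [heq]
      exact Finset.mem_filter.mpr ⟨hkS, hkd⟩
    exact (Finset.mem_filter.mp hkmem).2.2
  -- unique send for other workers
  have hsingle : ∀ i : Fin (4*n+1), i.val ≠ 0 → i ≠ i₁ → ∀ k, σ.sdst k = i → k ∈ SS →
      σ.sstart k + redC n S y (σ.sdst k) ≤ redT n S - redW n S i := by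
    intro i h0 hne k hkd hkS
    obtain ⟨kf, hkf1, hkf2⟩ := hfeed i h0
    have hkfS : kf ∈ SS := by
      rw [hSSdef]; simp only [Finset.mem_filter, Finset.mem_univ, true_and]
      rw [hkf1]
      linarith [hT_ge_tstar i h0]
    have hcard1 : (SS.filter (fun k' => σ.sdst k' = i)).card = 1 := by
      have h0' := hfib_eq i
      rw [if_pos h0, hρ_other i hne] at h0'
      omega
    have hkmem : k ∈ SS.filter (fun k' => σ.sdst k' = i) := Finset.mem_filter.mpr ⟨hkS, hkd⟩
    have hkfmem : kf ∈ SS.filter (fun k' => σ.sdst k' = i) := Finset.mem_filter.mpr ⟨hkfS, hkf1⟩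
    have hkkf : k = kf := Finset.card_le_one.mp (le_of_eq hcard1) k hkmem kf hkfmem
    rw [hkkf, hkf1]
    exact hkf2
  -- deadline pins the worker to Q₀
  have hQ0 : ∀ i : Fin (4*n+1), 3*n < i.val → ∀ e : ℝ, (n:ℝ)*(S:ℝ) ≤ e →
      e ≤ redT n S - redW n S i → i.val = 3*n+1 := by
    intro i h3 e he1 he2
    rw [deadline_Q h3] at he2
    by_contra hne
    have ht1 : 1 ≤ i.val - (3*n+1) := by omega
    have ht1' : (1:ℝ) ≤ ((i.val - (3*n+1) : ℕ) : ℝ) := by exact_mod_cast ht1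
    have hmm := mul_le_mul_of_nonneg_right ht1' (le_of_lt hS')
    rw [one_mul] at hmm
    linarith
  -- final case analysis
  by_cases hcase : σ.sdst km = i₁
  · have hemu₁ : σ.sstart km + redC n S y (σ.sdst km) ≤ max (σ.pstart p₁) r₁ :=
      hfib_complete km hcase hkmS
    have hi₁val : i₁.val = 3*n+1 := by
      rcases le_max_iff.mp hemu₁ with h | h
      · exact hQ0 i₁ hi₁Q _ (by linarith [hemge]) (le_trans h hp₁d)
      · exfalso; linarith [hemge, hr₁S, hnS2]
    by_cases hcase2 : σ.sdst k₂ = i₁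
    · have h1 : kp ∈ SS.filter (fun k' => σ.sdst k' = i₁) := Finset.mem_filter.mpr ⟨hkpS, hkpdst⟩
      have h2 : km ∈ SS.filter (fun k' => σ.sdst k' = i₁) := Finset.mem_filter.mpr ⟨hkmS, hcase⟩
      have h3 : k₂ ∈ SS.filter (fun k' => σ.sdst k' = i₁) := Finset.mem_filter.mpr ⟨hk₂S, hcase2⟩
      have hsub3 : ({kp, km, k₂} : Finset (Fin σ.nSend)) ⊆ SS.filter (fun k' => σ.sdst k' = i₁) := by
        intro x hx
        simp only [Finset.mem_insert, Finset.mem_singleton] at hx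
        rcases hx with rfl | rfl | rfl <;> assumption
      have hc3 : ({kp, km, k₂} : Finset (Fin σ.nSend)).card = 3 := by
        rw [Finset.card_insert_of_notMem (by simp [hkpne_m, hkpne_2]),
          Finset.card_insert_of_notMem (by simp; exact fun h => hk₂ne h.symm),
          Finset.card_singleton]
      have hle := Finset.card_le_card hsub3
      rw [hc3, hfib2] at hle
      omega
    · have hd₂val : (σ.sdst k₂).val = 3*n+1 :=
        hQ0 _ hd₂Q _ he₂ge (hsingle _ (by omega) hcase2 k₂ rfl hk₂S)
      exact hcase2 (Fin.ext (by rw [hd₂val, hi₁val]))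
  · have hdmval : (σ.sdst km).val = 3*n+1 :=
      hQ0 _ hdmQ _ (by linarith [hemge]) (hsingle _ (by omega) hcase km rfl hkmS)
    by_cases hcase2 : σ.sdst k₂ = i₁
    · have he₂u₁ := hfib_complete k₂ hcase2 hk₂S
      rcases le_max_iff.mp he₂u₁ with h | h
      · have hi₁val : i₁.val = 3*n+1 := hQ0 i₁ hi₁Q _ he₂ge (le_trans h hp₁d)
        exact hcase (Fin.ext (by rw [hdmval, hi₁val]))
      · linarith [he₂ge, hr₁S, hnS2]
    · have hd₂val : (σ.sdst k₂).val = 3*n+1 :=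
        hQ0 _ hd₂Q _ he₂ge (hsingle _ (by omega) hcase2 k₂ rfl hk₂S)
      have hdd : σ.sdst k₂ = σ.sdst km := Fin.ext (by rw [hd₂val, hdmval])
      have hcard1 : (SS.filter (fun k' => σ.sdst k' = σ.sdst km)).card = 1 := by
        have h0' := hfib_eq (σ.sdst km)
        rw [if_pos (by omega : (σ.sdst km).val ≠ 0), hρ_other _ hcase] at h0'
        omega
      have h1 : k₂ ∈ SS.filter (fun k' => σ.sdst k' = σ.sdst km) :=
        Finset.mem_filter.mpr ⟨hk₂S, hdd⟩
      have h2 : km ∈ SS.filter (fun k' => σ.sdst k' = σ.sdst km) :=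
        Finset.mem_filter.mpr ⟨hkmS, rfl⟩
      exact hk₂ne (Finset.card_le_one.mp (le_of_eq hcard1) k₂ h1 km h2)
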